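/- Consider U(θ, ω) = (1/2)θᵀθ - (1/2)ωᵀω + θᵀCω with C ∈ ℝ^{p×p} full rank, and the SGA iterates θ_{t+1} = θ_t - η∇_θU(θ_t,ω_t), ω_{t+1} = ω_t + η∇_ωU(θ_t,ω_t). Then for any learning rate η ∈ ℝ, ‖θ_{t+1}‖² + ‖ω_{t+1}‖² ≥ (λ_min(CᵀC)/(1 + λ_min(CᵀC)))·(‖θ_t‖² + ‖ω_t‖²). -/

import Mathlib

open Matrix
noncomputable section

/-- Largest eigenvalue (for symmetric matrices: sup of real spectrum). -/
def lamMax {n : Type*} [Fintype n] [DecidableEq n] (M : Matrix n n ℝ) : ℝ :=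
  sSup (spectrum ℝ M)

/-- Smallest eigenvalue (for symmetric matrices: inf of real spectrum). -/
def lamMin {n : Type*} [Fintype n] [DecidableEq n] (M : Matrix n n ℝ) : ℝ :=
  sInf (spectrum ℝ M)

/-- Operator (spectral) norm of a square real matrix. -/
def opNorm {n : Type*} [Fintype n] [DecidableEq n] (M : Matrix n n ℝ) : ℝ :=
  ‖toEuclideanCLM (𝕜 := ℝ) M‖

open Classical in
/-- Positive semidefinite square root (junk value `0` if `M` is not PSD). -/
def msqrt {n : Type*} [Fintype n] [DecidableEq n] (M : Matrix n n ℝ) : Matrix n n ℝ :=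
  if h : M.PosSemidef then h.1.eigenvectorUnitary.1 * diagonal (fun i => Real.sqrt (h.1.eigenvalues i)) *
    (star h.1.eigenvectorUnitary : Matrix n n ℝ) else 0

/-!
The cross terms of one SGA step cancel, because the `ω`-update applies the adjoint of the
coupling `C` that drives the `θ`-update. What is left is
`(1 - η)² (‖θ‖² + ‖ω‖²) + η² (‖C ω‖² + ‖Cᵀ θ‖²)`. Since `CᵀC` and `CCᵀ` have the same
characteristic polynomial, both `‖C ω‖² ≥ λ ‖ω‖²` and `‖Cᵀ θ‖² ≥ λ ‖θ‖²` with
`λ = λ_min(CᵀC)`, and `λ / (1 + λ)` is the minimum of `(1 - η)² + λ η²` over `η`.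
-/

open RealInnerProductSpace

theorem Matrix.spectrum_mul_comm {n K : Type*} [Fintype n] [DecidableEq n] [Field K]
    (A B : Matrix n n K) : spectrum K (A * B) = spectrum K (B * A) := by
  ext r
  simp only [mem_spectrum_iff_isRoot_charpoly, charpoly_mul_comm]

theorem Matrix.posSemidef_transpose_mul_self {m n : Type*} [Fintype m] [Fintype n] (C : Matrix m n ℝ) :
    (Cᵀ * C).PosSemidef := by
  simpa only [conjTranspose_eq_transpose_of_trivial] using posSemidef_conjTranspose_mul_self C

section lamMin

variable {n : Type*} [Fintype n] [DecidableEq n]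

theorem lamMin_mul_comm (A B : Matrix n n ℝ) : lamMin (A * B) = lamMin (B * A) := by
  rw [lamMin, lamMin, spectrum_mul_comm]

theorem Matrix.PosSemidef.lamMin_nonneg {M : Matrix n n ℝ} (hM : M.PosSemidef) :
    0 ≤ lamMin M := by
  refine Real.sInf_nonneg fun r hr => ?_
  rw [hM.isHermitian.spectrum_real_eq_range_eigenvalues] at hr
  obtain ⟨i, rfl⟩ := hr
  exact hM.eigenvalues_nonneg i

theorem Matrix.IsHermitian.lamMin_mul_norm_sq_le_inner {M : Matrix n n ℝ} (hM : M.IsHermitian)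
    (x : EuclideanSpace ℝ n) : lamMin M * ‖x‖ ^ 2 ≤ ⟪x, toEuclideanCLM (𝕜 := ℝ) M x⟫ := by
  set b := hM.eigenvectorBasis
  have hb : ∀ i, toEuclideanCLM (𝕜 := ℝ) M (b i) = hM.eigenvalues i • b i := fun i =>
    congrArg (WithLp.toLp 2) (hM.mulVec_eigenvectorBasis i)
  have hadj : (toEuclideanCLM (𝕜 := ℝ) M).adjoint = toEuclideanCLM (𝕜 := ℝ) M := by
    rw [← ContinuousLinearMap.star_eq_adjoint, ← map_star, star_eq_conjTranspose, hM.eq]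
  have hquad : ⟪x, toEuclideanCLM (𝕜 := ℝ) M x⟫ = ∑ i, hM.eigenvalues i * ⟪b i, x⟫ ^ 2 := by
    rw [← b.sum_inner_mul_inner]
    refine Finset.sum_congr rfl fun i _ => ?_
    rw [← ContinuousLinearMap.adjoint_inner_left, hadj, hb, real_inner_smul_left, real_inner_comm x]
    ring
  rw [hquad, ← b.sum_sq_inner_right, Finset.mul_sum]
  gcongr with i
  exact csInf_le (finite_real_spectrum (A := M)).bddBelow (hM.eigenvalues_mem_spectrum_real i)

theorem Matrix.toEuclideanCLM_transpose (C : Matrix n n ℝ) :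
    toEuclideanCLM (𝕜 := ℝ) Cᵀ = (toEuclideanCLM (𝕜 := ℝ) C).adjoint := by
  rw [← ContinuousLinearMap.star_eq_adjoint, ← map_star, star_eq_conjTranspose,
    conjTranspose_eq_transpose_of_trivial]

theorem lamMin_transpose_mul_self_mul_norm_sq_le (C : Matrix n n ℝ) (x : EuclideanSpace ℝ n) :
    lamMin (Cᵀ * C) * ‖x‖ ^ 2 ≤ ‖toEuclideanCLM (𝕜 := ℝ) C x‖ ^ 2 := by
  calc lamMin (Cᵀ * C) * ‖x‖ ^ 2 ≤ ⟪x, toEuclideanCLM (𝕜 := ℝ) (Cᵀ * C) x⟫ :=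
        (posSemidef_transpose_mul_self C).isHermitian.lamMin_mul_norm_sq_le_inner x
    _ = ‖toEuclideanCLM (𝕜 := ℝ) C x‖ ^ 2 := by
        rw [map_mul, mul_apply_eq_comp, toEuclideanCLM_transpose,
          ContinuousLinearMap.adjoint_inner_right, real_inner_self_eq_norm_sq]

end lamMin

theorem norm_sq_add_norm_sq_sga_step {E F : Type*} [NormedAddCommGroup E] [InnerProductSpace ℝ E]
    [CompleteSpace E] [NormedAddCommGroup F] [InnerProductSpace ℝ F] [CompleteSpace F]
    (A : F →L[ℝ] E) (η : ℝ) (θ : E) (ω : F) :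
    ‖θ - η • (θ + A ω)‖ ^ 2 + ‖ω + η • (A.adjoint θ - ω)‖ ^ 2 =
      (1 - η) ^ 2 * (‖θ‖ ^ 2 + ‖ω‖ ^ 2) + η ^ 2 * (‖A ω‖ ^ 2 + ‖A.adjoint θ‖ ^ 2) := by
  have hcross : ⟪ω, A.adjoint θ⟫ = ⟪θ, A ω⟫ := by
    rw [ContinuousLinearMap.adjoint_inner_right, real_inner_comm]
  simp only [← real_inner_self_eq_norm_sq, inner_sub_left, inner_sub_right, inner_add_left,
    inner_add_right, real_inner_smul_left, real_inner_smul_right, real_inner_comm θ (A ω),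
    real_inner_comm ω (A.adjoint θ)]
  rw [hcross]
  ring

-- Equality holds at `η = 1 / (1 + l)`, so `l / (1 + l)` is the minimum over `η`.
theorem div_one_add_le_one_sub_sq_add_sq_mul {l : ℝ} (hl : 0 ≤ l) (η : ℝ) :
    l / (1 + l) ≤ (1 - η) ^ 2 + η ^ 2 * l := by
  rw [div_le_iff₀ (by linarith)]
  nlinarith [sq_nonneg ((1 + l) * η - 1)]

theorem stmt3_general {p : ℕ} (C : Matrix (Fin p) (Fin p) ℝ) (η : ℝ)
    (θ ω : ℕ → EuclideanSpace ℝ (Fin p))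
    (hθ : ∀ t, θ (t + 1) = θ t - η • (θ t + toEuclideanCLM (𝕜 := ℝ) C (ω t)))
    (hω : ∀ t, ω (t + 1) = ω t + η • (toEuclideanCLM (𝕜 := ℝ) Cᵀ (θ t) - ω t)) :
    ∀ t, ‖θ (t + 1)‖ ^ 2 + ‖ω (t + 1)‖ ^ 2 ≥
      (lamMin (Cᵀ * C) / (1 + lamMin (Cᵀ * C))) * (‖θ t‖ ^ 2 + ‖ω t‖ ^ 2) := by
  intro t
  set l := lamMin (Cᵀ * C)
  have hl : 0 ≤ l := (posSemidef_transpose_mul_self C).lamMin_nonneg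
  have hCω : l * ‖ω t‖ ^ 2 ≤ ‖toEuclideanCLM (𝕜 := ℝ) C (ω t)‖ ^ 2 :=
    lamMin_transpose_mul_self_mul_norm_sq_le C (ω t)
  have hCθ : l * ‖θ t‖ ^ 2 ≤ ‖toEuclideanCLM (𝕜 := ℝ) Cᵀ (θ t)‖ ^ 2 := by
    simpa only [transpose_transpose, l, lamMin_mul_comm C] using
      lamMin_transpose_mul_self_mul_norm_sq_le Cᵀ (θ t)
  rw [hθ, hω, ge_iff_le, toEuclideanCLM_transpose, norm_sq_add_norm_sq_sga_step,
    ← toEuclideanCLM_transpose]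
  calc l / (1 + l) * (‖θ t‖ ^ 2 + ‖ω t‖ ^ 2)
      ≤ ((1 - η) ^ 2 + η ^ 2 * l) * (‖θ t‖ ^ 2 + ‖ω t‖ ^ 2) := by
        gcongr; exact div_one_add_le_one_sub_sq_add_sq_mul hl η
    _ = (1 - η) ^ 2 * (‖θ t‖ ^ 2 + ‖ω t‖ ^ 2) + η ^ 2 * (l * ‖ω t‖ ^ 2 + l * ‖θ t‖ ^ 2) := by
        ring
    _ ≤ _ := by gcongr

theorem stmt3 {p : ℕ} (C : Matrix (Fin p) (Fin p) ℝ) (hC : C.rank = p) (η : ℝ)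
    (θ ω : ℕ → EuclideanSpace ℝ (Fin p))
    (hθ : ∀ t, θ (t + 1) = θ t - η • (θ t + toEuclideanCLM (𝕜 := ℝ) C (ω t)))
    (hω : ∀ t, ω (t + 1) = ω t + η • (toEuclideanCLM (𝕜 := ℝ) Cᵀ (θ t) - ω t)) :
    ∀ t, ‖θ (t + 1)‖ ^ 2 + ‖ω (t + 1)‖ ^ 2 ≥
      (lamMin (Cᵀ * C) / (1 + lamMin (Cᵀ * C))) * (‖θ t‖ ^ 2 + ‖ω t‖ ^ 2) :=
  stmt3_general C η θ ω hθ hω
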